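/- arXiv:2408.06278 — 7 statements merged into one kernel-verified Lean document; each statement's English description precedes it below -/
import Mathlib

section
/- For e ≥ 5 and any integer w, 5^(w + 2^(e-5)) ≡ 5^w + 2^(e-3) (mod 2^(e-2)). -/
lemma five_pow_two_pow (k : ℕ) :
    (5:ℤ)^(2^k) ≡ 1 + 2^(k+2) [ZMOD (2:ℤ)^(k+3)] := by
  induction k with
  | zero => decide
  | succ k ih =>
    obtain ⟨c, hc⟩ := Int.ModEq.dvd ih.symm
    have h5 : (5:ℤ)^(2^k) = 1 + 2^(k+2) + 2^(k+3) * c := by linarith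
    have hsq : (5:ℤ)^(2^(k+1)) = ((5:ℤ)^(2^k))^2 := by
      rw [← pow_mul, pow_succ, mul_comm]
    rw [hsq, h5]
    have : ((1:ℤ) + 2^(k+2) + 2^(k+3) * c)^2 - (1 + 2^(k+1+2))
        = 2^(k+1+3) * (2^k + c * (1 + 2^(k+2)) + 2^(k+2) * c^2) := by ring
    exact (Int.modEq_iff_dvd.mpr ⟨_, this⟩).symm

/-- For `e ≥ 5` and any exponent `w`, `5^(w + 2^(e-5)) ≡ 5^w + 2^(e-3) (mod 2^(e-2))`. -/
theorem five_pow_add_pow_two (e : ℕ) (he : 5 ≤ e) (w : ℕ) :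
    (5:ℤ)^(w + 2^(e-5)) ≡ 5^w + 2^(e-3) [ZMOD (2:ℤ)^(e-2)] := by
  obtain ⟨k, rfl⟩ : ∃ k, e = k + 5 := ⟨e - 5, by omega⟩
  have h5 : k + 5 - 5 = k := by omega
  have h3 : k + 5 - 3 = k + 2 := by omega
  have h2 : k + 5 - 2 = k + 3 := by omega
  rw [h5, h3, h2, pow_add (5:ℤ)]
  have step1 : (5:ℤ)^w * 5^(2^k) ≡ 5^w * (1 + 2^(k+2)) [ZMOD (2:ℤ)^(k+3)] :=
    (five_pow_two_pow k).mul_left _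
  refine step1.trans ?_
  obtain ⟨d, hd⟩ : (4:ℤ) ∣ 5^w - 1 := by
    have : (5:ℤ)^w ≡ 1^w [ZMOD 4] := Int.ModEq.pow w (by decide)
    simpa [one_pow] using this.symm.dvd
  have : (5:ℤ)^w * (1 + 2^(k+2)) - (5^w + 2^(k+2)) = 2^(k+3) * (2 * d) := by
    have h : (5:ℤ)^w = 1 + 4 * d := by linarith
    rw [h]; ring
  exact (Int.modEq_iff_dvd.mpr ⟨_, this⟩).symm
end

section
/- For e ≥ 4, define on the set V_e = (ℤ/2^{e-2}ℤ)ˣ × ℤ/2ℤ × ℤ/2ℤ the operation ([a₁],[a₂],[a₃]) ⋆ ([a₁'],[a₂'],[a₃']) = ([a₁a₁' + 2^{e-3}a₃a₂'], [a₂+a₂'], [a₃+a₃']). Then (V_e, ⋆) is a group with identity ([1],[0],[0]) and the inverse of ([a₁],[a₂],[a₃]) is ([1+2^{e-3}a₃a₂][a₁]⁻¹, [−a₂], [−a₃]). -/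
private lemma two_mul_t {e : ℕ} (he : 4 ≤ e) : (2:ZMod (2^(e-2))) * 2^(e-3) = 0 := by
  have h : (2:ZMod (2^(e-2))) * 2^(e-3) = 2^(e-2) := by
    rw [← pow_succ']
    congr 1; omega
  rw [h]
  have h0 : ((2^(e-2) : ℕ) : ZMod (2^(e-2))) = 0 := ZMod.natCast_self _
  push_cast at h0; exact h0

private lemma t_mul_t {e : ℕ} (he : 4 ≤ e) : (2^(e-3):ZMod (2^(e-2))) * 2^(e-3) = 0 := by
  have h : (2^(e-3):ZMod (2^(e-2))) * 2^(e-3) = 2^(e-4) * (2 * 2^(e-3)) := by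
    rw [← pow_succ', ← pow_add, ← pow_add]; congr 1; omega
  rw [h, two_mul_t he, mul_zero]

private lemma t_mul_nat {e : ℕ} (he : 4 ≤ e) (n : ℕ) :
    (2^(e-3):ZMod (2^(e-2))) * (n : ZMod (2^(e-2)))
      = 2^(e-3) * ((n % 2 : ℕ) : ZMod (2^(e-2))) := by
  conv_lhs => rw [show n = 2*(n/2) + n % 2 by omega]
  push_cast
  have h2 : ((n/2 : ℕ) : ZMod (2^(e-2))) * 2 ^ (e-3) * 2
      = (n/2 : ℕ) * (2 * 2^(e-3)) := by ring
  ring_nf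
  rw [h2, two_mul_t he, mul_zero, zero_add]

private lemma t_mul_unit {e : ℕ} (he : 4 ≤ e) {u : ZMod (2^(e-2))} (hu : IsUnit u) :
    (2^(e-3) : ZMod (2^(e-2))) * u = 2^(e-3) := by
  lift u to (ZMod (2^(e-2)))ˣ using hu with v
  have hcop := ZMod.val_coe_unit_coprime v
  have hdvd : (2:ℕ) ∣ 2^(e-2) := dvd_pow_self 2 (by omega)
  have hodd : (v : ZMod (2^(e-2))).val % 2 = 1 := by
    have h := Nat.Coprime.coprime_dvd_right hdvd hcop
    rcases Nat.mod_two_eq_zero_or_one ((v : ZMod (2^(e-2))).val) with h0 | h1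
    · exact absurd (Nat.Coprime.eq_one_of_dvd h.symm (Nat.dvd_of_mod_eq_zero h0)) (by norm_num)
    · exact h1
  have hc : (((v : ZMod (2^(e-2))).val : ℕ) : ZMod (2^(e-2))) = (v : ZMod (2^(e-2))) :=
    ZMod.natCast_val _ |>.trans (ZMod.cast_id _ _)
  calc (2^(e-3) : ZMod (2^(e-2))) * v
      = 2^(e-3) * (((v : ZMod (2^(e-2))).val : ℕ) : ZMod (2^(e-2))) := by rw [hc]
    _ = 2^(e-3) * ((((v : ZMod (2^(e-2))).val % 2 : ℕ)) : ZMod (2^(e-2))) := t_mul_nat he _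
    _ = 2^(e-3) := by rw [hodd]; simp

private lemma t_mul_val_add {e : ℕ} (he : 4 ≤ e) (a b : ZMod 2) :
    (2^(e-3):ZMod (2^(e-2))) * ((a+b).val : ZMod (2^(e-2)))
      = 2^(e-3) * (a.val : ZMod (2^(e-2))) + 2^(e-3) * (b.val : ZMod (2^(e-2))) := by
  rw [ZMod.val_add, ← t_mul_nat he (a.val + b.val)]
  push_cast; ring

private lemma zmod2_neg (a : ZMod 2) : -a = a := by revert a; decide

/-- The binary operation `⋆` on `V_e = ZMod (2^(e-2)) × ZMod 2 × ZMod 2`. -/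
def vstar (e : ℕ) (x y : ZMod (2^(e-2)) × ZMod 2 × ZMod 2) :
    ZMod (2^(e-2)) × ZMod 2 × ZMod 2 :=
  (x.1 * y.1 + 2^(e-3) * (x.2.2.val : ZMod (2^(e-2))) * (y.2.1.val : ZMod (2^(e-2))),
    x.2.1 + y.2.1, x.2.2 + y.2.2)

/-- For `e ≥ 4`, `(V_e, ⋆)` (elements with invertible first component) is a group
with identity `([1],[0],[0])` and the indicated inverse. -/
theorem vstar_group (e : ℕ) (he : 4 ≤ e) :
    (∀ x y : ZMod (2^(e-2)) × ZMod 2 × ZMod 2, IsUnit x.1 → IsUnit y.1 →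
      IsUnit (vstar e x y).1) ∧
    (∀ x y z : ZMod (2^(e-2)) × ZMod 2 × ZMod 2, IsUnit x.1 → IsUnit y.1 → IsUnit z.1 →
      vstar e (vstar e x y) z = vstar e x (vstar e y z)) ∧
    (∀ x : ZMod (2^(e-2)) × ZMod 2 × ZMod 2,
      vstar e (1, 0, 0) x = x ∧ vstar e x (1, 0, 0) = x) ∧
    (∀ x : ZMod (2^(e-2)) × ZMod 2 × ZMod 2, IsUnit x.1 →
      vstar e x ((1 + 2^(e-3) * (x.2.2.val : ZMod (2^(e-2))) * (x.2.1.val : ZMod (2^(e-2))))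
          * Ring.inverse x.1, -x.2.1, -x.2.2) = (1, 0, 0) ∧
      vstar e ((1 + 2^(e-3) * (x.2.2.val : ZMod (2^(e-2))) * (x.2.1.val : ZMod (2^(e-2))))
          * Ring.inverse x.1, -x.2.1, -x.2.2) x = (1, 0, 0)) := by
  refine ⟨?_, ?_, ?_, ?_⟩
  · intro x y hx hy
    simp only [vstar]
    refine IsNilpotent.isUnit_add_left_of_commute ?_ (hx.mul hy) (Commute.all _ _)
    refine ⟨2, ?_⟩
    rw [pow_two]
    have : (2^(e-3) * (x.2.2.val : ZMod (2^(e-2))) * (y.2.1.val : ZMod (2^(e-2)))) *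
        (2^(e-3) * (x.2.2.val : ZMod (2^(e-2))) * (y.2.1.val : ZMod (2^(e-2))))
        = (2^(e-3) * 2^(e-3)) * ((x.2.2.val : ZMod (2^(e-2))) * x.2.2.val *
            (y.2.1.val * y.2.1.val)) := by ring
    rw [this, t_mul_t he, zero_mul]
  · intro x y z hx hy hz
    simp only [vstar, Prod.mk.injEq]
    refine ⟨?_, add_assoc _ _ _, add_assoc _ _ _⟩
    have e1 := t_mul_val_add he x.2.2 y.2.2
    have e2 := t_mul_val_add he y.2.1 z.2.1
    have e3 := t_mul_unit he hz
    have e4 := t_mul_unit he hx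
    linear_combination (z.2.1.val : ZMod (2^(e-2))) * e1
      - (x.2.2.val : ZMod (2^(e-2))) * e2
      + (x.2.2.val : ZMod (2^(e-2))) * (y.2.1.val : ZMod (2^(e-2))) * e3
      - (y.2.2.val : ZMod (2^(e-2))) * (z.2.1.val : ZMod (2^(e-2))) * e4
  · intro x
    constructor <;> simp [vstar]
  · intro x hx
    have h1 : x.1 * Ring.inverse x.1 = 1 := Ring.mul_inverse_cancel x.1 hx
    have h2 : Ring.inverse x.1 * x.1 = 1 := Ring.inverse_mul_cancel x.1 hx
    have h0 := two_mul_t he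
    constructor <;>
      · simp only [vstar, Prod.mk.injEq, zmod2_neg]
        refine ⟨?_, by simp [CharTwo.add_self_eq_zero], by simp [CharTwo.add_self_eq_zero]⟩
        linear_combination (1 + 2^(e-3) * (x.2.2.val : ZMod (2^(e-2))) *
            (x.2.1.val : ZMod (2^(e-2)))) * h1
          + (x.2.2.val : ZMod (2^(e-2))) * (x.2.1.val : ZMod (2^(e-2))) * h0
end

section
/- For e ≥ 4, the center of the group (V_e, ⋆) is {([a₁],[0],[0]) : a₁ odd}, a subgroup of order 2^{e-3}. -/
def vcenterEquiv (n : ℕ) :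
    {x : ZMod n × ZMod 2 × ZMod 2 // IsUnit x.1 ∧ x.2.1 = 0 ∧ x.2.2 = 0} ≃
      {u : ZMod n // IsUnit u} where
  toFun x := ⟨x.1.1, x.2.1⟩
  invFun u := ⟨(u.1, 0, 0), u.2, rfl, rfl⟩
  left_inv := by
    rintro ⟨⟨a, b, c⟩, h, hb, hc⟩
    simp only at hb hc
    subst hb; subst hc; rfl
  right_inv := by rintro ⟨u, hu⟩; rfl

noncomputable def unitsEquivIsUnit' (M : Type*) [Monoid M] : Mˣ ≃ {x : M // IsUnit x} where
  toFun u := ⟨u, u.isUnit⟩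
  invFun x := x.2.unit
  left_inv u := Units.ext rfl
  right_inv x := Subtype.ext x.2.unit_spec

/-- For `e ≥ 4`, the center of `(V_e, ⋆)` consists of the elements `([a₁],[0],[0])`
with `a₁` invertible, and it has `2^(e-3)` elements. -/
theorem vstar_center (e : ℕ) (he : 4 ≤ e) :
    {x : ZMod (2^(e-2)) × ZMod 2 × ZMod 2 | IsUnit x.1 ∧
        ∀ y, IsUnit y.1 → vstar e x y = vstar e y x} =
      {x : ZMod (2^(e-2)) × ZMod 2 × ZMod 2 | IsUnit x.1 ∧ x.2.1 = 0 ∧ x.2.2 = 0} ∧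
    Nat.card {x : ZMod (2^(e-2)) × ZMod 2 × ZMod 2 //
        IsUnit x.1 ∧ x.2.1 = 0 ∧ x.2.2 = 0} = 2^(e-3) := by
  have hpos : 0 < 2^(e-2) := Nat.pow_pos (by norm_num)
  haveI : NeZero (2^(e-2)) := ⟨hpos.ne'⟩
  have hne : ((2:ZMod (2^(e-2))))^(e-3) ≠ 0 := by
    have : ((2^(e-3) : ℕ) : ZMod (2^(e-2))) ≠ 0 := by
      rw [Ne, ZMod.natCast_eq_zero_iff]
      intro h
      have h1 := Nat.le_of_dvd (Nat.pow_pos (by norm_num)) h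
      have h2 : (2:ℕ)^(e-3) < 2^(e-2) := Nat.pow_lt_pow_right (by norm_num) (by omega)
      omega
    simpa using this
  have h2cases : ∀ a : ZMod 2, a = 0 ∨ a = 1 := by decide
  have v0 : ((0:ZMod 2)).val = 0 := rfl
  have v1 : ((1:ZMod 2)).val = 1 := rfl
  constructor
  · ext x
    simp only [Set.mem_setOf_eq]
    constructor
    · rintro ⟨hx, hc⟩
      refine ⟨hx, ?_, ?_⟩
      · have h := congrArg Prod.fst (hc (1, 0, 1) (by simp))
        simp only [vstar] at h
        rcases h2cases x.2.1 with h0 | h0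
        · exact h0
        · exfalso
          rw [h0, v0, v1] at h
          push_cast at h
          exact hne (by linear_combination -h)
      · have h := congrArg Prod.fst (hc (1, 1, 0) (by simp))
        simp only [vstar] at h
        rcases h2cases x.2.2 with h0 | h0
        · exact h0
        · exfalso
          rw [h0, v0, v1] at h
          push_cast at h
          exact hne (by linear_combination h)
    · rintro ⟨hx, h1, h2⟩
      refine ⟨hx, fun y hy => ?_⟩
      simp only [vstar, h1, h2, ZMod.val_zero, Nat.cast_zero, mul_zero, zero_mul, add_zero,
        zero_add]
      rw [mul_comm]
  · rw [Nat.card_congr (vcenterEquiv (2^(e-2))),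
      Nat.card_congr (unitsEquivIsUnit' (ZMod (2^(e-2)))).symm,
      Nat.card_eq_fintype_card, ZMod.card_units_eq_totient,
      Nat.totient_prime_pow Nat.prime_two (show 0 < e - 2 by omega)]
    have h3 : e - 2 - 1 = e - 3 := by omega
    rw [h3]
    ring
end

section
/- For e ≥ 4, the kth power of ([a₁],[1],[1]) in (V_e,⋆) equals ([a₁^k],[0],[0]) if k ≡ 0 (mod 4), ([a₁^k],[1],[1]) if k ≡ 1, ([a₁^k + 2^{e-3}],[0],[0]) if k ≡ 2, and ([a₁^k + 2^{e-3}],[1],[1]) if k ≡ 3 (mod 4), for any odd integer a₁. -/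
/-- `k`-th power with respect to `⋆`. -/
def vpow (e : ℕ) (x : ZMod (2^(e-2)) × ZMod 2 × ZMod 2) (k : ℕ) :
    ZMod (2^(e-2)) × ZMod 2 × ZMod 2 :=
  (vstar e x)^[k] (1, 0, 0)

lemma vpow_succ (e : ℕ) (x : ZMod (2^(e-2)) × ZMod 2 × ZMod 2) (k : ℕ) :
    vpow e x (k+1) = vstar e x (vpow e x k) := by
  simp [vpow, Function.iterate_succ_apply']

/-- For `e ≥ 4` and odd `a₁`, the `k`-th power of `([a₁],[1],[1])` in `(V_e, ⋆)`. -/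
theorem vpow_formula (e : ℕ) (he : 4 ≤ e) (a₁ : ℤ) (ha : Odd a₁) (k : ℕ) :
    (k % 4 = 0 → vpow e ((a₁ : ZMod (2^(e-2))), 1, 1) k = ((a₁ : ZMod (2^(e-2)))^k, 0, 0)) ∧
    (k % 4 = 1 → vpow e ((a₁ : ZMod (2^(e-2))), 1, 1) k = ((a₁ : ZMod (2^(e-2)))^k, 1, 1)) ∧
    (k % 4 = 2 → vpow e ((a₁ : ZMod (2^(e-2))), 1, 1) k
        = ((a₁ : ZMod (2^(e-2)))^k + 2^(e-3), 0, 0)) ∧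
    (k % 4 = 3 → vpow e ((a₁ : ZMod (2^(e-2))), 1, 1) k
        = ((a₁ : ZMod (2^(e-2)))^k + 2^(e-3), 1, 1)) := by
  have hzero : ((2:ZMod (2^(e-2)))^(e-3)) * 2 = 0 := by
    have h1 : (e-3)+1 = e-2 := by omega
    have h2 := ZMod.natCast_self (2^(e-2))
    push_cast at h2
    rw [← pow_succ, h1, h2]
  have hdbl : ((2:ZMod (2^(e-2)))^(e-3)) + 2^(e-3) = 0 := by
    rw [← mul_two]; exact hzero
  have hval1 : (1 : ZMod 2).val = 1 := rfl
  have hval0 : (0 : ZMod 2).val = 0 := rfl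
  have h11 : (1 : ZMod 2) + 1 = 0 := by decide
  obtain ⟨m, hm⟩ := ha
  have hodd : (a₁ : ZMod (2^(e-2))) * 2^(e-3) = 2^(e-3) := by
    rw [hm]; push_cast; ring_nf
    rw [mul_assoc, hzero, mul_zero, zero_add]
  induction k with
  | zero =>
    refine ⟨fun _ => by simp [vpow], fun h => by omega, fun h => by omega, fun h => by omega⟩
  | succ k ih =>
    obtain ⟨ih0, ih1, ih2, ih3⟩ := ih
    refine ⟨fun h => ?_, fun h => ?_, fun h => ?_, fun h => ?_⟩
    · have hk : k % 4 = 3 := by omega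
      rw [vpow_succ, ih3 hk]
      simp only [vstar, hval1, h11]
      push_cast
      rw [mul_add, hodd]
      rw [Prod.mk.injEq, Prod.mk.injEq]
      refine ⟨by rw [mul_one, mul_one, add_assoc, hdbl, add_zero, pow_succ]; ring, by decide, by decide⟩
    · have hk : k % 4 = 0 := by omega
      rw [vpow_succ, ih0 hk]
      simp only [vstar, hval1, hval0]
      push_cast
      rw [Prod.mk.injEq, Prod.mk.injEq]
      refine ⟨by rw [pow_succ]; ring, by decide, by decide⟩
    · have hk : k % 4 = 1 := by omega
      rw [vpow_succ, ih1 hk]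
      simp only [vstar, hval1, h11]
      push_cast
      rw [Prod.mk.injEq, Prod.mk.injEq]
      refine ⟨by rw [pow_succ]; ring, by decide, by decide⟩
    · have hk : k % 4 = 2 := by omega
      rw [vpow_succ, ih2 hk]
      simp only [vstar, hval1, hval0]
      push_cast
      rw [mul_add, hodd]
      rw [Prod.mk.injEq, Prod.mk.injEq]
      refine ⟨by rw [pow_succ]; ring, by decide, by decide⟩
end

section
/- For e ≥ 4, the automorphism group of the unit group (ℤ/2^eℤ)ˣ is isomorphic to the group (V_e, ⋆), via the map sending the automorphism determined by [-1] ↦ [-1][5]^{t₁}, [5] ↦ [-1]^{t₂}[5]^{t₃} to ([t₃]_{2^{e-2}}, [t₂]₂, [t₁/2^{e-3}]₂). -/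
private lemma auxPowTor {M : Type*} [Monoid M] {x : M} {k : ℕ} (h : x ^ k = 1) {m n : ℕ}
    (hmn : m % k = n % k) : x ^ m = x ^ n := by
  conv_lhs => rw [← Nat.div_add_mod m k]
  conv_rhs => rw [← Nat.div_add_mod n k]
  simp only [pow_add, pow_mul, h, one_pow, one_mul, hmn]

private lemma auxFivePow (k : ℕ) : ∃ m : ℤ, 5 ^ (2^k) = 1 + 2^(k+2) * (2*m+1) := by
  induction k with
  | zero => exact ⟨0, by norm_num⟩
  | succ k ih =>
    obtain ⟨m, hm⟩ := ih
    refine ⟨m + 2^k * (2*m+1)^2, ?_⟩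
    rw [pow_succ 2 k, pow_mul, hm]
    ring

set_option maxHeartbeats 3000000 in
/-- For `e ≥ 4`, `Aut((ZMod (2^e))ˣ)` is isomorphic to `(V_e, ⋆)` via the map sending
the automorphism determined by `[-1] ↦ [-1][5]^{t₁}`, `[5] ↦ [-1]^{t₂}[5]^{t₃}` to
`([t₃], [t₂], [t₁/2^(e-3)])`. -/
theorem aut_units_iso_vstar (e : ℕ) (he : 4 ≤ e)
    (a b : (ZMod (2^e))ˣ) (ha : (a : ZMod (2^e)) = -1) (hb : (b : ZMod (2^e)) = 5) :
    ∃ f : MulAut (ZMod (2^e))ˣ → ZMod (2^(e-2)) × ZMod 2 × ZMod 2,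
      Function.Injective f ∧
      Set.range f = {x : ZMod (2^(e-2)) × ZMod 2 × ZMod 2 | IsUnit x.1} ∧
      (∀ φ ψ : MulAut (ZMod (2^e))ˣ, f (φ * ψ) = vstar e (f φ) (f ψ)) ∧
      (∀ (φ : MulAut (ZMod (2^e))ˣ) (t₁ t₂ t₃ : ℕ),
        (t₁ = 0 ∨ t₁ = 2^(e-3)) → t₂ ≤ 1 → Odd t₃ →
        φ a = a * b^t₁ → φ b = a^t₂ * b^t₃ →
        f φ = ((t₃ : ZMod (2^(e-2))), (t₂ : ZMod 2), ((t₁ / 2^(e-3) : ℕ) : ZMod 2))) := by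
  obtain ⟨d, rfl⟩ : ∃ d, e = d + 4 := ⟨e - 4, by omega⟩
  clear he
  show ∃ f : MulAut (ZMod (2^(d+4)))ˣ → ZMod (2^(d+2)) × ZMod 2 × ZMod 2,
      Function.Injective f ∧
      Set.range f = {x : ZMod (2^(d+2)) × ZMod 2 × ZMod 2 | IsUnit x.1} ∧
      (∀ φ ψ : MulAut (ZMod (2^(d+4)))ˣ, f (φ * ψ) = vstar (d+4) (f φ) (f ψ)) ∧
      (∀ (φ : MulAut (ZMod (2^(d+4)))ˣ) (t₁ t₂ t₃ : ℕ),
        (t₁ = 0 ∨ t₁ = 2^(d+1)) → t₂ ≤ 1 → Odd t₃ →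
        φ a = a * b^t₁ → φ b = a^t₂ * b^t₃ →
        f φ = ((t₃ : ZMod (2^(d+2))), (t₂ : ZMod 2), ((t₁ / 2^(d+1) : ℕ) : ZMod 2)))
  haveI h24 : NeZero ((2:ℕ)^(d+4)) := ⟨pow_ne_zero _ two_ne_zero⟩
  haveI h22 : NeZero ((2:ℕ)^(d+2)) := ⟨pow_ne_zero _ two_ne_zero⟩
  haveI hf2 : Fact (2 < 2^(d+4)) := ⟨by
    calc (2:ℕ) = 2^1 := (pow_one 2).symm
    _ < 2^(d+4) := Nat.pow_lt_pow_right one_lt_two (by omega)⟩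
  haveI hf1 : Fact (1 < 2^(d+2)) := ⟨by
    calc (1:ℕ) = 2^0 := rfl
    _ < 2^(d+2) := Nat.pow_lt_pow_right one_lt_two (by omega)⟩
  -- basic facts about a
  have ha2 : a^2 = 1 := Units.ext (by
    rw [Units.val_pow_eq_pow_val, ha, Units.val_one, neg_one_sq])
  have ha1 : a ≠ 1 := fun h => ZMod.neg_one_ne_one (n := 2^(d+4)) (by rw [← ha, h, Units.val_one])
  have hoa : orderOf a = 2 := orderOf_eq_prime ha2 ha1
  -- basic facts about b
  have hpow0 : ((2:ZMod (2^(d+4))))^(d+4) = 0 := by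
    have := ZMod.natCast_self (2^(d+4))
    push_cast at this
    exact this
  have hb4 : b ^ 2^(d+2) = 1 := by
    apply Units.ext
    rw [Units.val_pow_eq_pow_val, hb, Units.val_one]
    obtain ⟨m, hm⟩ := auxFivePow (d+2)
    have e1 : d+2+2 = d+4 := by omega
    rw [e1] at hm
    have h5 := congrArg (fun z : ℤ => (z : ZMod (2^(d+4)))) hm
    push_cast at h5
    rw [h5, hpow0]
    ring
  have hb3 : b ^ 2^(d+1) ≠ 1 := by
    intro h
    have hv : ((5:ZMod (2^(d+4))))^2^(d+1) = 1 := by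
      rw [← hb, ← Units.val_pow_eq_pow_val, h, Units.val_one]
    obtain ⟨m, hm⟩ := auxFivePow (d+1)
    have e1 : d+1+2 = d+3 := by omega
    rw [e1] at hm
    have h5 := congrArg (fun z : ℤ => (z : ZMod (2^(d+4)))) hm
    push_cast at h5
    rw [hv] at h5
    have h3 : ((2:ZMod (2^(d+4))))^(d+3) * (2*(m:ZMod (2^(d+4)))+1) = 2^(d+3) := by
      have hr : ((2:ZMod (2^(d+4))))^(d+3) * (2*(m:ZMod (2^(d+4)))+1)
          = 2^(d+3) + 2^(d+4)*m := by ring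
      rw [hr, hpow0]
      ring
    rw [h3] at h5
    have hz : ((2:ZMod (2^(d+4))))^(d+3) = 0 := by linear_combination -h5
    have hzz : ((2^(d+3) : ℕ) : ZMod (2^(d+4))) = 0 := by push_cast; exact hz
    rw [ZMod.natCast_eq_zero_iff] at hzz
    have hle := Nat.le_of_dvd (by positivity) hzz
    have hlt : (2:ℕ)^(d+3) < 2^(d+4) := Nat.pow_lt_pow_right one_lt_two (by omega)
    omega
  have hob : orderOf b = 2^(d+2) := orderOf_eq_prime_pow (n := d+1) hb3 hb4
  -- character to ZMod 4
  have hdvd : (4:ℕ) ∣ 2^(d+4) := by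
    have h4 : (4:ℕ) = 2^2 := rfl
    rw [h4]; exact pow_dvd_pow 2 (by omega)
  set χ : (ZMod (2^(d+4)))ˣ →* (ZMod 4)ˣ :=
    Units.map (ZMod.castHom hdvd (ZMod 4)).toMonoidHom with hχ
  have hχb : χ b = 1 := by
    apply Units.ext
    rw [hχ, Units.coe_map]
    have h5 : (5 : ZMod (2^(d+4))) = ((5:ℕ) : ZMod (2^(d+4))) := by norm_cast
    simp only [RingHom.toMonoidHom_eq_coe, MonoidHom.coe_coe, hb, h5, map_natCast,
      Units.val_one]
    decide
  have hχa : χ a ≠ 1 := by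
    intro h
    have hv := congrArg Units.val h
    rw [hχ, Units.coe_map] at hv
    simp only [RingHom.toMonoidHom_eq_coe, MonoidHom.coe_coe, ha, map_neg, map_one,
      Units.val_one] at hv
    exact absurd hv (by decide)
  -- the decomposition map
  set W : ZMod 2 × ZMod (2^(d+2)) → (ZMod (2^(d+4)))ˣ :=
    fun p => a ^ p.1.val * b ^ p.2.val with hW
  have hWinj : Function.Injective W := by
    rintro ⟨i, j⟩ ⟨i', j'⟩ h
    simp only [hW] at h
    have hi : i.val < 2 := ZMod.val_lt i
    have hi' : i'.val < 2 := ZMod.val_lt i'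
    by_cases hii : i.val = i'.val
    · rw [hii] at h
      have hbj : b ^ j.val = b ^ j'.val := mul_left_cancel h
      rw [pow_eq_pow_iff_modEq, hob, Nat.ModEq,
        Nat.mod_eq_of_lt (ZMod.val_lt j), Nat.mod_eq_of_lt (ZMod.val_lt j')] at hbj
      exact Prod.ext (ZMod.val_injective _ hii) (ZMod.val_injective _ hbj)
    · exfalso
      have hc := congrArg χ h
      simp only [map_mul, map_pow, hχb, one_pow, mul_one] at hc
      apply hχa
      rcases (by omega : i.val = 0 ∧ i'.val = 1 ∨ i.val = 1 ∧ i'.val = 0) with ⟨h1,h2⟩|⟨h1,h2⟩ <;>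
        rw [h1, h2] at hc <;> simp at hc
      · exact hc.symm
      · exact hc
  have hcard : Fintype.card (ZMod 2 × ZMod (2^(d+2))) = Fintype.card (ZMod (2^(d+4)))ˣ := by
    rw [Fintype.card_prod, ZMod.card, ZMod.card, ZMod.card_units_eq_totient,
      Nat.totient_prime_pow Nat.prime_two (by omega : 0 < d+4)]
    have h1 : d+4-1 = d+3 := by omega
    rw [h1]
    have h2 : (2:ℕ)^(d+3) = 2 * 2^(d+2) := by ring
    omega
  have hWbij : Function.Bijective W :=
    (Fintype.bijective_iff_injective_and_card W).2 ⟨hWinj, hcard⟩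
  have hWsurj := hWbij.2
  -- torsion rewriting helpers
  have hapow : ∀ m n : ℕ, m % 2 = n % 2 → a^m = a^n := fun m n h => auxPowTor ha2 h
  have hbpow : ∀ m n : ℕ, m % 2^(d+2) = n % 2^(d+2) → b^m = b^n := fun m n h => auxPowTor hb4 h
  have hcollect : ∀ (m n m' n' : ℕ), (a^m * b^n) * (a^m' * b^n') = a^(m+m') * b^(n+n') := by
    intro m n m' n'
    rw [mul_mul_mul_comm, ← pow_add, ← pow_add]
  have hpowk : ∀ (m n k : ℕ), (a^m * b^n)^k = a^(m*k) * b^(n*k) := by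
    intro m n k
    rw [mul_pow, ← pow_mul, ← pow_mul]
  have hmatch : ∀ (m n m' n' : ℕ), m % 2 = m' % 2 → n % 2^(d+2) = n' % 2^(d+2) →
      a^m * b^n = a^(m') * b^(n') := by
    intro m n m' n' h1 h2
    rw [hapow m m' h1, hbpow n n' h2]
  -- parity helpers
  have hunit1 : ∀ y : ZMod 2, IsUnit y → y = 1 := by decide
  set ρ : ZMod (2^(d+2)) →+* ZMod 2 :=
    ZMod.castHom (dvd_pow_self 2 (by omega : d+2 ≠ 0)) (ZMod 2) with hρdef
  have hρval : ∀ x : ZMod (2^(d+2)), ρ x = ((x.val : ℕ) : ZMod 2) := by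
    intro x
    rw [hρdef, ZMod.castHom_apply, ← ZMod.natCast_val]
  have hpar : ∀ x : ZMod (2^(d+2)), x.val % 2 = 1 ↔ ρ x = 1 := by
    intro x
    rw [hρval]
    constructor
    · intro h
      rw [← ZMod.natCast_mod, h, Nat.cast_one]
    · intro h
      have hv := congrArg ZMod.val h
      rw [ZMod.val_natCast] at hv
      simpa [show ((1 : ZMod 2)).val = 1 from rfl] using hv
  have hunit_odd : ∀ x : ZMod (2^(d+2)), IsUnit x → x.val % 2 = 1 :=
    fun x hx => (hpar x).mpr (hunit1 _ (hx.map ρ))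
  have hodd_unit : ∀ x : ZMod (2^(d+2)), x.val % 2 = 1 → IsUnit x := by
    intro x hx
    rw [← (ZMod.natCast_rightInverse x : ((x.val:ℕ) : ZMod (2^(d+2))) = x),
      ZMod.isUnit_iff_coprime]
    exact Nat.Coprime.pow_right _ (Nat.coprime_two_right.mpr (Nat.odd_iff.mpr hx))
  have hpd1 : (0:ℕ) < 2^(d+1) := by positivity
  have hpd2 : (2:ℕ)^(d+2) = 2^(d+1)*2 := by rw [pow_succ]
  -- existence of canonical form for any automorphism
  have hP : ∀ φ : MulAut (ZMod (2^(d+4)))ˣ, ∃ p : ZMod (2^(d+2)) × ZMod 2 × ZMod 2,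
      IsUnit p.1 ∧ φ a = a^1 * b^(2^(d+1) * p.2.2.val) ∧ φ b = a^(p.2.1.val) * b^(p.1.val) := by
    intro φ
    obtain ⟨⟨i1, j1⟩, h1⟩ := hWsurj (φ a)
    have h1' : φ a = a^(i1.val) * b^(j1.val) := by rw [← h1]
    obtain ⟨⟨i2, j2⟩, h2⟩ := hWsurj (φ b)
    have h2' : φ b = a^(i2.val) * b^(j2.val) := by rw [← h2]
    have hfa2 : (φ a)^2 = 1 := by rw [← map_pow, ha2, map_one]
    have hfa1 : φ a ≠ 1 := by
      intro h
      exact ha1 (φ.injective (h.trans (map_one φ).symm))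
    -- b ^ (2 * j1.val) = 1
    have hb2j : b^(j1.val * 2) = 1 := by
      have h3 : (a^(i1.val) * b^(j1.val))^2 = 1 := by rw [← h1']; exact hfa2
      rw [hpowk] at h3
      have ha0 : a^(i1.val*2) = 1 := by
        rw [mul_comm i1.val 2, pow_mul, ha2, one_pow]
      rwa [ha0, one_mul] at h3
    have hdvdj : 2^(d+1) ∣ j1.val := by
      have hd := orderOf_dvd_of_pow_eq_one hb2j
      rw [hob] at hd
      obtain ⟨c, hc⟩ := hd
      have hc2 : j1.val * 2 = (2^(d+1)*c) * 2 := by rw [hc, hpd2]; ring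
      exact ⟨c, Nat.eq_of_mul_eq_mul_right (by norm_num) hc2⟩
    obtain ⟨q, hq⟩ := hdvdj
    have hq2 : q < 2 := by
      have hlt := ZMod.val_lt j1
      rw [hq, hpd2] at hlt
      exact Nat.lt_of_mul_lt_mul_left hlt
    have hi1 : i1.val = 1 := by
      have hiv : i1.val < 2 := ZMod.val_lt i1
      rcases (by omega : i1.val = 0 ∨ i1.val = 1) with h0 | h1v
      · exfalso
        have h1'' : φ a = b^(j1.val) := by rw [h1', h0, pow_zero, one_mul]
        rcases (by omega : q = 0 ∨ q = 1) with rfl|rfl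
        · apply hfa1
          rw [h1'', hq, Nat.mul_zero, pow_zero]
        · -- φ a = b^(2^(d+1)) is a square, but a is not
          have hsq : φ a = (b^(2^d))^2 := by
            rw [h1'', hq, ← pow_mul]
            congr 1
            rw [pow_succ]
            omega
          have haeq : a = (φ.symm (b^(2^d)))^2 := by
            have h4 := congrArg φ.symm hsq
            rw [MulEquiv.symm_apply_apply, map_pow] at h4
            exact h4
          obtain ⟨⟨p1, r1⟩, hy⟩ := hWsurj (φ.symm (b^(2^d)))
          have hy' : φ.symm (b^(2^d)) = a^(p1.val) * b^(r1.val) := by rw [← hy]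
          have h5 : a = a^(p1.val*2) * b^(r1.val*2) := by
            conv_lhs => rw [haeq]
            rw [hy']
            exact hpowk _ _ _
          have hch := congrArg χ h5
          rw [map_mul, map_pow, map_pow, hχb, one_pow, mul_one] at hch
          have hca2 : (χ a)^2 = 1 := by rw [← map_pow, ha2, map_one]
          rw [mul_comm p1.val 2, pow_mul, hca2, one_pow] at hch
          exact hχa hch
      · exact h1v
    have hj2odd : j2.val % 2 = 1 := by
      rcases (by omega : j2.val % 2 = 0 ∨ j2.val % 2 = 1) with hcon | h
      · exfalso
        obtain ⟨c, hc⟩ := Nat.dvd_of_mod_eq_zero hcon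
        apply hb3
        apply φ.injective
        rw [map_pow, map_one, h2', hpowk]
        have hae : a^(i2.val * 2^(d+1)) = 1 := by
          rw [show i2.val * 2^(d+1) = 2 * (i2.val * 2^d) from by ring, pow_mul, ha2, one_pow]
        have hbe : b^(j2.val * 2^(d+1)) = 1 := by
          rw [hc, show 2 * c * 2^(d+1) = 2^(d+2) * c from by rw [hpd2]; ring, pow_mul,
            hb4, one_pow]
        rw [hae, hbe, one_mul]
      · exact h
    refine ⟨⟨j2, i2, (q : ZMod 2)⟩, hodd_unit j2 hj2odd, ?_, h2'⟩
    rw [h1', hi1]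
    congr 1
    apply hbpow
    rw [ZMod.val_natCast, hq, Nat.mod_eq_of_lt hq2]
  choose f hfu hfa hfb using hP
  have hlt12 : (2:ℕ)^(d+1) < 2^(d+2) := by omega
  have hUniq : ∀ (φ : MulAut (ZMod (2^(d+4)))ˣ) (p : ZMod (2^(d+2)) × ZMod 2 × ZMod 2),
      φ a = a^1 * b^(2^(d+1) * p.2.2.val) → φ b = a^(p.2.1.val) * b^(p.1.val) → f φ = p := by
    intro φ p h1 h2
    have hbeq : b^(2^(d+1) * (f φ).2.2.val) = b^(2^(d+1) * p.2.2.val) :=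
      mul_left_cancel ((hfa φ).symm.trans h1)
    rw [pow_eq_pow_iff_modEq, hob, Nat.ModEq] at hbeq
    have hs : (f φ).2.2 = p.2.2 := by
      apply ZMod.val_injective
      have l1 : (f φ).2.2.val < 2 := ZMod.val_lt _
      have l2 : p.2.2.val < 2 := ZMod.val_lt _
      rcases (by omega : (f φ).2.2.val = 0 ∨ (f φ).2.2.val = 1) with hx|hx <;>
        rcases (by omega : p.2.2.val = 0 ∨ p.2.2.val = 1) with hy|hy <;>
          simp only [hx, hy, Nat.mul_zero, Nat.mul_one, Nat.zero_mod,
            Nat.mod_eq_of_lt hlt12] at hbeq ⊢ <;> omega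
    have hiu := hWinj (a₁ := ((f φ).2.1, (f φ).1)) (a₂ := (p.2.1, p.1)) (by
      calc W ((f φ).2.1, (f φ).1) = φ b := by rw [hfb φ]
        _ = W (p.2.1, p.1) := by rw [h2])
    have e1 : (f φ).2.1 = p.2.1 := (Prod.ext_iff.mp hiu).1
    have e2 : (f φ).1 = p.1 := (Prod.ext_iff.mp hiu).2
    exact Prod.ext e2 (Prod.ext e1 hs)
  have hgen : ∀ (g₁ g₂ : (ZMod (2^(d+4)))ˣ →* (ZMod (2^(d+4)))ˣ),
      g₁ a = g₂ a → g₁ b = g₂ b → ∀ x, g₁ x = g₂ x := by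
    intro g₁ g₂ e1 e2 x
    obtain ⟨⟨i0, j0⟩, rfl⟩ := hWsurj x
    show g₁ (a ^ i0.val * b ^ j0.val) = g₂ (a ^ i0.val * b ^ j0.val)
    rw [map_mul, map_mul, map_pow, map_pow, map_pow, map_pow, e1, e2]
  have hmul2 : ∀ X Y : ℕ, X % 2 = Y % 2 → 2^(d+1)*X % 2^(d+2) = 2^(d+1)*Y % 2^(d+2) := by
    intro X Y h
    rw [hpd2, Nat.mul_mod_mul_left, Nat.mul_mod_mul_left, h]
  have hcomp : ∀ (g : (ZMod (2^(d+4)))ˣ →* (ZMod (2^(d+4)))ˣ) (u u' : ZMod (2^(d+2)))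
      (i i' s s' : ZMod 2),
      u.val % 2 = 1 → u'.val % 2 = 1 →
      g a = a^1 * b^(2^(d+1) * s.val) → g b = a^(i.val) * b^(u.val) →
      g (a^1 * b^(2^(d+1) * s'.val)) = a^1 * b^(2^(d+1) * (s+s').val) ∧
      g (a^(i'.val) * b^(u'.val)) = a^((i+i').val) *
        b^((u * u' + 2^(d+1) * ((s.val : ZMod (2^(d+2)))) * ((i'.val : ZMod (2^(d+2))))).val) := by
    intro g u u' i i' s s' hu hu' hga hgb
    have hsv : s.val < 2 := ZMod.val_lt s
    have hsv' : s'.val < 2 := ZMod.val_lt s'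
    have hiv : i.val < 2 := ZMod.val_lt i
    have hiv' : i'.val < 2 := ZMod.val_lt i'
    constructor
    · calc g (a^1 * b^(2^(d+1) * s'.val))
          = (a^1 * b^(2^(d+1)*s.val))^1 * (a^(i.val) * b^(u.val))^(2^(d+1) * s'.val) := by
            rw [map_mul, map_pow, map_pow, hga, hgb]
        _ = a^(1*1) * b^((2^(d+1)*s.val)*1) *
            (a^(i.val*(2^(d+1)*s'.val)) * b^(u.val*(2^(d+1)*s'.val))) := by
            rw [hpowk, hpowk]
        _ = a^(1*1 + i.val*(2^(d+1)*s'.val)) * b^((2^(d+1)*s.val)*1 + u.val*(2^(d+1)*s'.val)) :=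
            hcollect _ _ _ _
        _ = a^1 * b^(2^(d+1) * (s+s').val) := by
            apply hmatch
            · obtain ⟨c, hc⟩ : ∃ c, i.val * (2^(d+1)*s'.val) = 2*c :=
                ⟨i.val*(2^d*s'.val), by ring⟩
              omega
            · rw [show (2^(d+1)*s.val)*1 + u.val*(2^(d+1)*s'.val)
                  = 2^(d+1)*(s.val + u.val*s'.val) from by ring]
              apply hmul2
              rw [ZMod.val_add, Nat.mod_mod_of_dvd _ dvd_rfl]
              rcases (by omega : s'.val = 0 ∨ s'.val = 1) with h|h <;> rw [h] <;> omega
    · have hU : (u * u' + 2^(d+1) * ((s.val : ZMod (2^(d+2)))) * ((i'.val : ZMod (2^(d+2))))).val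
          = (u.val * u'.val + 2^(d+1) * s.val * i'.val) % 2^(d+2) := by
        rw [show (u * u' + 2^(d+1) * ((s.val : ZMod (2^(d+2)))) * ((i'.val : ZMod (2^(d+2)))))
            = ((u.val * u'.val + 2^(d+1) * s.val * i'.val : ℕ) : ZMod (2^(d+2))) from by
          push_cast [ZMod.natCast_val, ZMod.cast_id]
          ring, ZMod.val_natCast]
      calc g (a^(i'.val) * b^(u'.val))
          = (a^1 * b^(2^(d+1)*s.val))^(i'.val) * (a^(i.val) * b^(u.val))^(u'.val) := by
            rw [map_mul, map_pow, map_pow, hga, hgb]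
        _ = a^(1*i'.val) * b^((2^(d+1)*s.val)*i'.val) * (a^(i.val*u'.val) * b^(u.val*u'.val)) := by
            rw [hpowk, hpowk]
        _ = a^(1*i'.val + i.val*u'.val) * b^((2^(d+1)*s.val)*i'.val + u.val*u'.val) :=
            hcollect _ _ _ _
        _ = _ := by
            apply hmatch
            · rw [ZMod.val_add]
              rcases (by omega : i.val = 0 ∨ i.val = 1) with h|h <;> rw [h] <;> omega
            · rw [hU, Nat.mod_mod_of_dvd _ dvd_rfl]
              congr 1
              ring
  -- construction of homomorphisms with prescribed values on a and b
  have hhom : ∀ (u : ZMod (2^(d+2))) (i s : ZMod 2),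
      ∃ g : (ZMod (2^(d+4)))ˣ →* (ZMod (2^(d+4)))ˣ,
        g a = a^1 * b^(2^(d+1)*s.val) ∧ g b = a^(i.val) * b^(u.val) := by
    intro u i s
    have hA2 : (a^1 * b^(2^(d+1)*s.val))^2 = 1 := by
      rw [hpowk, show (2^(d+1)*s.val)*2 = 2^(d+2)*s.val from by rw [hpd2]; ring,
        show (1*2 : ℕ) = 2 from rfl, ha2, pow_mul, hb4, one_pow, one_mul]
    have hB2 : (a^(i.val) * b^(u.val))^(2^(d+2)) = 1 := by
      rw [hpowk]
      have h1 : a^(i.val * 2^(d+2)) = 1 := by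
        rw [show i.val * 2^(d+2) = 2 * (i.val * 2^(d+1)) from by rw [hpd2]; ring,
          pow_mul, ha2, one_pow]
      have h2 : b^(u.val * 2^(d+2)) = 1 := by
        rw [show u.val * 2^(d+2) = 2^(d+2) * u.val from by ring, pow_mul, hb4, one_pow]
      rw [h1, h2, one_mul]
    set A' := a^1 * b^(2^(d+1)*s.val) with hA
    set B' := a^(i.val) * b^(u.val) with hB
    set E0 := Equiv.ofBijective W hWbij with hE0
    set h : ZMod 2 × ZMod (2^(d+2)) → (ZMod (2^(d+4)))ˣ :=
      fun p => A'^(p.1.val) * B'^(p.2.val) with hh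
    have hWs : ∀ z, W (E0.symm z) = z := fun z => E0.apply_symm_apply z
    have hWadd : ∀ p q, W (p + q) = W p * W q := by
      rintro ⟨x1,y1⟩ ⟨x2,y2⟩
      simp only [hW, Prod.mk_add_mk]
      rw [hcollect]
      apply hmatch
      · rw [ZMod.val_add, Nat.mod_mod_of_dvd _ dvd_rfl]
      · rw [ZMod.val_add, Nat.mod_mod_of_dvd _ dvd_rfl]
    have hhadd : ∀ p q, h (p + q) = h p * h q := by
      rintro ⟨x1,y1⟩ ⟨x2,y2⟩
      simp only [hh, Prod.mk_add_mk]
      rw [mul_mul_mul_comm, ← pow_add, ← pow_add,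
        auxPowTor hA2 (m := (x1+x2).val) (n := x1.val + x2.val)
          (by rw [ZMod.val_add, Nat.mod_mod_of_dvd _ dvd_rfl]),
        auxPowTor hB2 (m := (y1+y2).val) (n := y1.val + y2.val)
          (by rw [ZMod.val_add, Nat.mod_mod_of_dvd _ dvd_rfl])]
    refine ⟨MonoidHom.mk' (fun x => h (E0.symm x)) ?_, ?_, ?_⟩
    · intro x y
      show h (E0.symm (x*y)) = h (E0.symm x) * h (E0.symm y)
      have hc : E0.symm (x*y) = E0.symm x + E0.symm y := by
        apply hWinj
        rw [hWadd, hWs, hWs, hWs]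
      rw [hc, hhadd]
    · show h (E0.symm a) = A'
      have h1 : E0.symm a = ((1 : ZMod 2), (0 : ZMod (2^(d+2)))) := by
        apply hWinj
        rw [hWs]
        simp only [hW]
        rw [ZMod.val_zero, pow_zero, mul_one, show ((1 : ZMod 2)).val = 1 from rfl, pow_one]
      rw [h1]
      simp only [hh]
      rw [ZMod.val_zero, pow_zero, mul_one, show ((1 : ZMod 2)).val = 1 from rfl, pow_one]
    · show h (E0.symm b) = B'
      have h1 : E0.symm b = ((0 : ZMod 2), (1 : ZMod (2^(d+2)))) := by
        apply hWinj
        rw [hWs]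
        simp only [hW]
        rw [ZMod.val_zero, pow_zero, one_mul, ZMod.val_one, pow_one]
      rw [h1]
      simp only [hh]
      rw [ZMod.val_zero, pow_zero, one_mul, ZMod.val_one, pow_one]
  -- final assembly
  refine ⟨f, ?_, ?_, ?_, ?_⟩
  · -- injectivity
    intro φ ψ h
    apply MulEquiv.ext
    intro x
    have e1 : φ.toMonoidHom a = ψ.toMonoidHom a := by
      show φ a = ψ a
      rw [hfa φ, hfa ψ, h]
    have e2 : φ.toMonoidHom b = ψ.toMonoidHom b := by
      show φ b = ψ b
      rw [hfb φ, hfb ψ, h]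
    exact hgen φ.toMonoidHom ψ.toMonoidHom e1 e2 x
  · -- range
    ext ⟨u, i, s⟩
    simp only [Set.mem_range, Set.mem_setOf_eq]
    constructor
    · rintro ⟨φ, hφ⟩
      have := hfu φ
      rw [hφ] at this
      exact this
    · intro hu
      set v : ZMod (2^(d+2)) := ↑hu.unit⁻¹ with hv
      have huv : u * v = 1 := hu.mul_val_inv
      have hXpar : ρ (2^(d+1) * ((s.val : ZMod (2^(d+2)))) * ((i.val : ZMod (2^(d+2))))) = 0 := by
        have h2 : ρ (2 : ZMod (2^(d+2))) = 0 := by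
          have hc2 : ((2:ℕ) : ZMod (2^(d+2))) = (2 : ZMod (2^(d+2))) := by norm_cast
          rw [← hc2, map_natCast]
          decide
        rw [map_mul, map_mul, map_pow, h2, zero_pow (by omega : d+1 ≠ 0), zero_mul, zero_mul]
      have hρv : ρ v = 1 := hunit1 _ ((hu.unit⁻¹).isUnit.map ρ)
      have hu'par : (v * (1 - 2^(d+1) * ((s.val : ZMod (2^(d+2)))) * ((i.val : ZMod (2^(d+2)))))).val % 2 = 1 := by
        rw [hpar, map_mul, map_sub, map_one, hXpar, sub_zero, hρv, one_mul]
      have hupar : u.val % 2 = 1 := hunit_odd u hu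
      obtain ⟨g, hg1, hg2⟩ := hhom u i s
      obtain ⟨g', hg1', hg2'⟩ :=
        hhom (v * (1 - 2^(d+1) * ((s.val : ZMod (2^(d+2)))) * ((i.val : ZMod (2^(d+2)))))) i s
      have comp1 := hcomp g u _ i i s s hupar hu'par hg1 hg2
      have comp2 := hcomp g' _ u i i s s hu'par hupar hg1' hg2'
      have htt : ∀ t : ZMod 2, t + t = 0 := by decide
      have hX1 : u * (v * (1 - 2^(d+1) * ((s.val : ZMod (2^(d+2)))) * ((i.val : ZMod (2^(d+2))))))
          + 2^(d+1) * ((s.val : ZMod (2^(d+2)))) * ((i.val : ZMod (2^(d+2)))) = 1 := by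
        calc u * (v * (1 - 2^(d+1) * ((s.val : ZMod (2^(d+2)))) * ((i.val : ZMod (2^(d+2))))))
            + 2^(d+1) * ((s.val : ZMod (2^(d+2)))) * ((i.val : ZMod (2^(d+2))))
            = (u*v) * (1 - 2^(d+1) * ((s.val : ZMod (2^(d+2)))) * ((i.val : ZMod (2^(d+2)))))
              + 2^(d+1) * ((s.val : ZMod (2^(d+2)))) * ((i.val : ZMod (2^(d+2)))) := by ring
          _ = 1 := by rw [huv]; ring
      have hX2 : (v * (1 - 2^(d+1) * ((s.val : ZMod (2^(d+2)))) * ((i.val : ZMod (2^(d+2)))))) * u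
          + 2^(d+1) * ((s.val : ZMod (2^(d+2)))) * ((i.val : ZMod (2^(d+2)))) = 1 := by
        rw [mul_comm]
        exact hX1
      have hginv1 : ∀ x, g (g' x) = x := by
        intro x
        have e1 : (g.comp g') a = (MonoidHom.id _) a := by
          show g (g' a) = a
          rw [hg1', comp1.1, htt]
          show a^1 * b^(2^(d+1) * (0 : ZMod 2).val) = a
          rw [ZMod.val_zero, Nat.mul_zero, pow_zero, mul_one, pow_one]
        have e2 : (g.comp g') b = (MonoidHom.id _) b := by
          show g (g' b) = b
          rw [hg2', comp1.2, htt, hX1]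
          show a^((0:ZMod 2).val) * b^((1 : ZMod (2^(d+2))).val) = b
          rw [ZMod.val_zero, pow_zero, one_mul, ZMod.val_one, pow_one]
        simpa using hgen (g.comp g') (MonoidHom.id _) e1 e2 x
      have hginv2 : ∀ x, g' (g x) = x := by
        intro x
        have e1 : (g'.comp g) a = (MonoidHom.id _) a := by
          show g' (g a) = a
          rw [hg1, comp2.1, htt]
          show a^1 * b^(2^(d+1) * (0 : ZMod 2).val) = a
          rw [ZMod.val_zero, Nat.mul_zero, pow_zero, mul_one, pow_one]
        have e2 : (g'.comp g) b = (MonoidHom.id _) b := by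
          show g' (g b) = b
          rw [hg2, comp2.2, htt, hX2]
          show a^((0:ZMod 2).val) * b^((1 : ZMod (2^(d+2))).val) = b
          rw [ZMod.val_zero, pow_zero, one_mul, ZMod.val_one, pow_one]
        simpa using hgen (g'.comp g) (MonoidHom.id _) e1 e2 x
      refine ⟨MulEquiv.mk ⟨(fun x => g x), (fun x => g' x), hginv2, hginv1⟩ (map_mul g), ?_⟩
      apply hUniq
      · exact hg1
      · exact hg2
  · -- multiplicativity
    intro φ ψ
    have comp := hcomp φ.toMonoidHom (f φ).1 (f ψ).1 (f φ).2.1 (f ψ).2.1 (f φ).2.2 (f ψ).2.2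
      (hunit_odd _ (hfu φ)) (hunit_odd _ (hfu ψ))
      (show φ.toMonoidHom a = _ from hfa φ) (show φ.toMonoidHom b = _ from hfb φ)
    have heq : f (φ * ψ) = ((f φ).1 * (f ψ).1
        + 2^(d+1) * ((((f φ).2.2.val : ZMod (2^(d+2))))) * ((((f ψ).2.1.val : ZMod (2^(d+2))))),
        (f φ).2.1 + (f ψ).2.1, (f φ).2.2 + (f ψ).2.2) := by
      apply hUniq
      · show φ (ψ a) = _
        rw [hfa ψ]
        exact comp.1
      · show φ (ψ b) = _
        rw [hfb ψ]
        exact comp.2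
    rw [heq]
    rfl
  · -- the generator description
    intro φ t₁ t₂ t₃ ht₁ ht₂ ht₃ hpa hpb
    apply hUniq
    · rcases ht₁ with rfl | rfl
      · rw [hpa, Nat.zero_div]
        show a * b^0 = a^1 * b^(2^(d+1) * ((0:ℕ) : ZMod 2).val)
        rw [pow_zero, mul_one, pow_one, Nat.cast_zero, ZMod.val_zero, Nat.mul_zero,
          pow_zero, mul_one]
      · rw [hpa, Nat.div_self (by positivity : 0 < 2^(d+1))]
        show a * b^(2^(d+1)) = a^1 * b^(2^(d+1) * ((1:ℕ) : ZMod 2).val)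
        rw [Nat.cast_one, show ((1 : ZMod 2)).val = 1 from rfl, Nat.mul_one, pow_one]
    · rw [hpb]
      apply hmatch
      · rw [ZMod.val_natCast, Nat.mod_mod_of_dvd _ dvd_rfl]
      · rw [ZMod.val_natCast, Nat.mod_mod_of_dvd _ dvd_rfl]
end

section
/- In the multiplicative monoid ℤ/p^eℤ, for natural numbers u, u' and integers r, r' coprime to p, the equality [p]^u[r] = [p]^{u'}[r'] holds if and only if either u, u' ≥ e, or u = u' and r ≡ r' (mod p^{e-u}). -/
lemma aux_dvd (q : ℤ) (hq : Prime q) (e u u' : ℕ) (r r' : ℤ)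
    (hr : ¬ q ∣ r) (hue : u < e) (huu : u ≤ u')
    (h : q ^ e ∣ q ^ u * r - q ^ u' * r') : u = u' ∧ q ^ (e - u) ∣ r - r' := by
  have hq0 : q ^ u ≠ 0 := pow_ne_zero _ hq.ne_zero
  have h1 : q ^ u * r - q ^ u' * r' = q ^ u * (r - q ^ (u' - u) * r') := by
    rw [mul_sub, ← mul_assoc, ← pow_add, Nat.add_sub_cancel' huu]
  have he2 : q ^ e = q ^ u * q ^ (e - u) := by
    rw [← pow_add, Nat.add_sub_cancel' hue.le]
  rw [h1, he2, mul_dvd_mul_iff_left hq0] at h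
  have huu' : u = u' := by
    by_contra hne
    have hlt : u < u' := lt_of_le_of_ne huu hne
    have hqd : q ∣ r - q ^ (u' - u) * r' :=
      (dvd_pow_self q (Nat.sub_ne_zero_of_lt hue)).trans h
    have h2 : q ∣ q ^ (u' - u) * r' :=
      (dvd_pow_self q (Nat.sub_ne_zero_of_lt hlt)).mul_right r'
    have := dvd_add hqd h2
    simp only [sub_add_cancel] at this
    exact hr this
  subst huu'
  simp only [Nat.sub_self, pow_zero, one_mul] at h
  exact ⟨rfl, h⟩

/-- In the multiplicative monoid `ZMod (p^e)`, `[p]^u [r] = [p]^{u'} [r']` iff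
either `u, u' ≥ e`, or `u = u'` and `r ≡ r' (mod p^(e-u))`. -/
theorem zmod_p_pow_mul_eq_iff (p e : ℕ) (hp : p.Prime) (he : 1 ≤ e)
    (u u' : ℕ) (r r' : ℤ) (hr : IsCoprime (p : ℤ) r) (hr' : IsCoprime (p : ℤ) r') :
    (p : ZMod (p^e))^u * (r : ZMod (p^e)) = (p : ZMod (p^e))^u' * (r' : ZMod (p^e)) ↔
      (e ≤ u ∧ e ≤ u') ∨ (u = u' ∧ r ≡ r' [ZMOD (p : ℤ)^(e-u)]) := by
  have hq : Prime (p : ℤ) := Nat.prime_iff_prime_int.mp hp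
  have hdr : ¬ (p:ℤ) ∣ r := fun hd => hq.not_unit (hr.isUnit_of_dvd' dvd_rfl hd)
  have hdr' : ¬ (p:ℤ) ∣ r' := fun hd => hq.not_unit (hr'.isUnit_of_dvd' dvd_rfl hd)
  have key : ((p : ZMod (p^e))^u * (r : ZMod (p^e)) = (p : ZMod (p^e))^u' * (r' : ZMod (p^e))) ↔
      ((p:ℤ)^e ∣ (p:ℤ)^u' * r' - (p:ℤ)^u * r) := by
    rw [show ((p:ZMod (p^e))^u * (r:ZMod (p^e))) = (((p:ℤ)^u * r : ℤ) : ZMod (p^e)) by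
          push_cast; ring,
        show ((p:ZMod (p^e))^u' * (r':ZMod (p^e))) = (((p:ℤ)^u' * r' : ℤ) : ZMod (p^e)) by
          push_cast; ring,
        ZMod.intCast_eq_intCast_iff, Int.modEq_iff_dvd]
    push_cast
    rfl
  rw [key]
  constructor
  · intro h
    rcases le_or_gt e u with h1 | h1
    · rcases le_or_gt e u' with h2 | h2
      · exact Or.inl ⟨h1, h2⟩
      · -- u' < e ≤ u, so u' ≤ u; apply aux with swapped roles
        have h' : (p:ℤ) ^ e ∣ (p:ℤ) ^ u' * r' - (p:ℤ) ^ u * r := h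
        obtain ⟨heq, hdvd⟩ := aux_dvd (p:ℤ) hq e u' u r' r hdr' h2 (h2.le.trans h1) h'
        exact Or.inr ⟨heq.symm, by
          rw [Int.modEq_iff_dvd, ← heq]
          simpa using hdvd⟩
    · rcases le_total u u' with h2 | h2
      · have h' : (p:ℤ) ^ e ∣ (p:ℤ) ^ u * r - (p:ℤ) ^ u' * r' := by
          have := h.neg_right
          simpa using this
        obtain ⟨heq, hdvd⟩ := aux_dvd (p:ℤ) hq e u u' r r' hdr h1 h2 h'
        exact Or.inr ⟨heq, by
          rw [Int.modEq_iff_dvd]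
          simpa [neg_sub] using dvd_neg.mpr hdvd⟩
      · have hu'e : u' < e := lt_of_le_of_lt h2 h1
        obtain ⟨heq, hdvd⟩ := aux_dvd (p:ℤ) hq e u' u r' r hdr' hu'e h2 h
        exact Or.inr ⟨heq.symm, by
          rw [Int.modEq_iff_dvd, ← heq]
          simpa using hdvd⟩
  · rintro (⟨h1, h2⟩ | ⟨rfl, h2⟩)
    · exact dvd_sub ((pow_dvd_pow _ h2).mul_right r') ((pow_dvd_pow _ h1).mul_right r)
    · rw [Int.modEq_iff_dvd] at h2
      have hle : e ≤ u + (e - u) := by omega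
      have : (p:ℤ) ^ e ∣ (p:ℤ) ^ u * ((p:ℤ) ^ (e - u)) := by
        rw [← pow_add]; exact pow_dvd_pow _ hle
      have := this.trans (mul_dvd_mul_left ((p:ℤ)^u) h2)
      calc (p:ℤ)^e ∣ (p:ℤ)^u * ((r' : ℤ) - r) := this
        _ = (p:ℤ)^u * r' - (p:ℤ)^u * r := by ring
end

section
/- The monoid automorphism group of (ℤ/8ℤ, ·) is isomorphic to ℤ/2ℤ × ℤ/2ℤ; in particular it has order 4. -/
namespace Aut8

def fA : ZMod 8 → ZMod 8 := fun x => if x = 3 then 7 else if x = 7 then 3 else x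
def fB : ZMod 8 → ZMod 8 := fun x => if x = 2 then 6 else if x = 6 then 2 else x
def fC : ZMod 8 → ZMod 8 := fun x =>
  if x = 2 then 6 else if x = 6 then 2 else if x = 3 then 7 else if x = 7 then 3 else x

def A : MulAut (ZMod 8) :=
  { toFun := fA, invFun := fA, left_inv := by decide, right_inv := by decide,
    map_mul' := by decide }
def B : MulAut (ZMod 8) :=
  { toFun := fB, invFun := fB, left_inv := by decide, right_inv := by decide,
    map_mul' := by decide }
def C : MulAut (ZMod 8) :=
  { toFun := fC, invFun := fC, left_inv := by decide, right_inv := by decide,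
    map_mul' := by decide }

lemma classify (f : MulAut (ZMod 8)) : f = 1 ∨ f = A ∨ f = B ∨ f = C := by
  have h0 : f 0 = 0 := by
    have : f 0 = f (0 * f.symm 0) := by rw [zero_mul]
    rw [map_mul, f.apply_symm_apply, mul_zero] at this
    exact this
  have h1 : f 1 = 1 := map_one f
  have h4 : f 4 = f 2 * f 2 := by
    have : (4 : ZMod 8) = 2 * 2 := by decide
    rw [this, map_mul]
  have hcube : f 2 * f 2 * f 2 = 0 := by
    rw [← map_mul, ← map_mul]
    have : (2 * 2 * 2 : ZMod 8) = 0 := by decide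
    rw [this, h0]
  have hne0 : f 2 ≠ 0 := by
    intro h
    have := f.injective (h.trans h0.symm)
    exact absurd this (by decide)
  have hne4 : f 2 ≠ 4 := by
    intro h
    have h40 : f 4 = f 0 := by rw [h4, h, h0]; decide
    have := f.injective h40
    exact absurd this (by decide)
  have h2mem : f 2 = 2 ∨ f 2 = 6 :=
    (show ∀ x : ZMod 8, x * x * x = 0 → x ≠ 0 → x ≠ 4 → x = 2 ∨ x = 6 by decide)
      (f 2) hcube hne0 hne4
  have h5sq : f 5 * f 5 = 1 := by
    rw [← map_mul]
    have : (5 * 5 : ZMod 8) = 1 := by decide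
    rw [this, h1]
  have h52 : f 5 * f 2 = f 2 := by
    rw [← map_mul]
    have : (5 * 2 : ZMod 8) = 2 := by decide
    rw [this]
  have h5ne1 : f 5 ≠ 1 := by
    intro h
    have := f.injective (h.trans h1.symm)
    exact absurd this (by decide)
  have h5 : f 5 = 5 :=
    (show ∀ u x : ZMod 8, u * u = 1 → (x = 2 ∨ x = 6) → u * x = x → u ≠ 1 → u = 5 by decide)
      (f 5) (f 2) h5sq h2mem h52 h5ne1
  have h3sq : f 3 * f 3 = 1 := by
    rw [← map_mul]
    have : (3 * 3 : ZMod 8) = 1 := by decide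
    rw [this, h1]
  have h3ne1 : f 3 ≠ 1 := by
    intro h
    have := f.injective (h.trans h1.symm)
    exact absurd this (by decide)
  have h3ne5 : f 3 ≠ 5 := by
    intro h
    have := f.injective (h.trans h5.symm)
    exact absurd this (by decide)
  have h3mem : f 3 = 3 ∨ f 3 = 7 :=
    (show ∀ x : ZMod 8, x * x = 1 → x ≠ 1 → x ≠ 5 → x = 3 ∨ x = 7 by decide)
      (f 3) h3sq h3ne1 h3ne5
  have h6 : f 6 = f 3 * f 2 := by
    rw [← map_mul]
    have : (3 * 2 : ZMod 8) = 6 := by decide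
    rw [this]
  have h7 : f 7 = f 3 * 5 := by
    rw [← h5, ← map_mul]
    have : (3 * 5 : ZMod 8) = 7 := by decide
    rw [this]
  have key : ∀ g : MulAut (ZMod 8), f 2 = g 2 → f 3 = g 3 → g 0 = 0 → g 1 = 1 →
      g 4 = g 2 * g 2 → g 5 = 5 → g 6 = g 3 * g 2 → g 7 = g 3 * 5 → f = g := by
    intro g e2 e3 g0 g1 g4 g5 g6 g7
    apply MulEquiv.ext
    intro x
    have hx := (by decide : ∀ y : ZMod 8,
      y = 0 ∨ y = 1 ∨ y = 2 ∨ y = 3 ∨ y = 4 ∨ y = 5 ∨ y = 6 ∨ y = 7) x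
    rcases hx with h | h | h | h | h | h | h | h <;> subst h
    · rw [h0, g0]
    · rw [h1, g1]
    · rw [e2]
    · rw [e3]
    · rw [h4, g4, e2]
    · rw [h5, g5]
    · rw [h6, g6, e2, e3]
    · rw [h7, g7, e3]
  rcases h2mem with e2 | e2 <;> rcases h3mem with e3 | e3
  · exact Or.inl (key 1 (by rw [e2]; rfl) (by rw [e3]; rfl) rfl rfl (by decide) rfl rfl rfl)
  · exact Or.inr (Or.inl (key A (by rw [e2]; decide) (by rw [e3]; decide) (by decide) (by decide)
      (by decide) (by decide) (by decide) (by decide)))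
  · exact Or.inr (Or.inr (Or.inl (key B (by rw [e2]; decide) (by rw [e3]; decide) (by decide)
      (by decide) (by decide) (by decide) (by decide) (by decide))))
  · exact Or.inr (Or.inr (Or.inr (key C (by rw [e2]; decide) (by rw [e3]; decide) (by decide)
      (by decide) (by decide) (by decide) (by decide) (by decide))))

def Φ (f : MulAut (ZMod 8)) : Multiplicative (ZMod 2 × ZMod 2) :=
  Multiplicative.ofAdd (if f 3 = 3 then 0 else 1, if f 2 = 2 then 0 else 1)

def Ψ (p : Multiplicative (ZMod 2 × ZMod 2)) : MulAut (ZMod 8) :=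
  if (Multiplicative.toAdd p).1 = 0 then
    (if (Multiplicative.toAdd p).2 = 0 then 1 else B)
  else
    (if (Multiplicative.toAdd p).2 = 0 then A else C)

def e : MulAut (ZMod 8) ≃* Multiplicative (ZMod 2 × ZMod 2) where
  toFun := Φ
  invFun := Ψ
  left_inv f := by
    rcases classify f with h | h | h | h <;> subst h <;> decide
  right_inv p := by
    revert p; decide
  map_mul' f g := by
    rcases classify f with h | h | h | h <;> rcases classify g with h' | h' | h' | h' <;>
      subst h <;> subst h' <;> decide

end Aut8

/-- The monoid automorphism group of `(ZMod 8, ·)` is isomorphic to `ℤ/2 × ℤ/2`;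
in particular it has order 4. -/
theorem mul_aut_zmod_eight :
    Nonempty (MulAut (ZMod 8) ≃* Multiplicative (ZMod 2 × ZMod 2)) ∧
      Nat.card (MulAut (ZMod 8)) = 4 := by
  refine ⟨⟨Aut8.e⟩, ?_⟩
  rw [Nat.card_congr Aut8.e.toEquiv]
  simp [Nat.card_eq_fintype_card]
end
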